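/- Let A be a finite-dimensional left-symmetric color algebra over k with respect to ε, let p ≥ 2, and let f_0 = μ, f_1, …, f_{p−1} be 2-cochains of degree 0 such that for every 0 ≤ q ≤ p−1 and all homogeneous x,y,z ∈ A: Σ_{i+j=q, i,j≥0} ( f_i(f_j(x,y),z) − f_i(x,f_j(y,z)) − ε(|x|,|y|)( f_i(f_j(y,x),z) − f_i(y,f_j(x,z)) ) ) = 0 (i.e., F_{λ,p−1} = Σ_{i=0}^{p−1} λ^i f_i satisfies the left-symmetric color identity modulo λ^p). Then the 3-cochain g := Σ_{i=1}^{p−1} f_i∗f_{p−i} of degree 0 satisfies d₃(g) = 0, i.e., g is a 3-cocycle of degree 0. -/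

import Mathlib

open scoped TensorProduct

/-- A skew-symmetric bicharacter of an abelian group `G` over a field `k`. -/
structure Bicharacter (G : Type*) (k : Type*) [AddCommGroup G] [Field k] where
  ε : G → G → k
  ne_zero : ∀ a b : G, ε a b ≠ 0
  add_left : ∀ a b c : G, ε (a + b) c = ε a c * ε b c
  add_right : ∀ a b c : G, ε a (b + c) = ε a b * ε a c
  skew : ∀ a b : G, ε a b * ε b a = 1

/-- `(A, 𝒜, μ)` is a left-symmetric color algebra over `k` with respect to the
skew-symmetric bicharacter `ε`: the grading `𝒜` is an internal direct sum
decomposition of `A`, the multiplication `μ` respects the grading, and the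
left-symmetric color identity holds on homogeneous elements. -/
structure IsLSCA {G k A : Type*} [AddCommGroup G] [DecidableEq G] [Field k]
    [AddCommGroup A] [Module k A]
    (ε : Bicharacter G k) (𝒜 : G → Submodule k A) (μ : A →ₗ[k] A →ₗ[k] A) : Prop where
  internal : DirectSum.IsInternal 𝒜
  graded_mul : ∀ a b : G, ∀ x ∈ 𝒜 a, ∀ y ∈ 𝒜 b, μ x y ∈ 𝒜 (a + b)
  left_symm : ∀ a b c : G, ∀ x ∈ 𝒜 a, ∀ y ∈ 𝒜 b, ∀ z ∈ 𝒜 c,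
    μ (μ x y) z - μ x (μ y z) = ε.ε a b • (μ (μ y x) z - μ y (μ x z))

/-- The value on homogeneous elements (of degrees `a` and `b` in the first two slots)
of the 3-cochain `Σ_{i=1}^{p−1} f_i ∗ f_{p−i}`, where
`(f∗g)(x,y,z) = f(g(x,y),z) − f(x,g(y,z)) − ε(|x|,|y|)(f(g(y,x),z) − f(y,g(x,z)))`. -/
def starSum {G k A : Type*} [AddCommGroup G] [Field k] [AddCommGroup A] [Module k A]
    (ε : Bicharacter G k) (f : ℕ → (A →ₗ[k] A →ₗ[k] A)) (p : ℕ)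
    (a b : G) (x y z : A) : A :=
  ∑ i ∈ Finset.Ico 1 p,
    (f i (f (p - i) x y) z - f i x (f (p - i) y z)
      - ε.ε a b • (f i (f (p - i) y x) z - f i y (f (p - i) x z)))

/-!
Put `vᵢ = fᵢ` for `i < p` and `vᵢ = 0` otherwise, so that `g = Σ_{j+l=p} v_j ∗ v_l`.
For arbitrary bilinear maps, `d_U(V ∗ W)` splits into the terms with `U` outermost, minus those
of `d_V(W ∗ U)` with `V` outermost, plus a cross term whose partner under `U ↔ W` is subtracted.
Summed over all `i + j + l = p`, the first two parts cancel by cyclic reindexing and the cross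
terms by reversal, so `Σ_{i+j+l=p} d_{v_i}(v_j ∗ v_l) = 0` for every family `v`. For `i ≥ 1`
the inner sum `Σ_{j+l=p-i} v_j ∗ v_l` is a deformation equation of order `< p` and vanishes on
homogeneous elements, so only the term `i = 0`, which is `d₃ g`, is left.
-/

namespace LeftSymmetricColor

open Finset

section Reindex

variable {M : Type*} [AddCommMonoid M]

theorem sum_antidiagonal_antidiagonal_rotate (p : ℕ) (F : ℕ → ℕ → ℕ → M) :
    ∑ iq ∈ antidiagonal p, ∑ jl ∈ antidiagonal iq.2, F jl.1 jl.2 iq.1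
      = ∑ iq ∈ antidiagonal p, ∑ jl ∈ antidiagonal iq.2, F iq.1 jl.1 jl.2 := by
  rw [sum_sigma', sum_sigma']
  refine sum_nbij' (fun x => ⟨(x.2.1, x.2.2 + x.1.1), (x.2.2, x.1.1)⟩)
    (fun x => ⟨(x.2.2, x.1.1 + x.2.1), (x.1.1, x.2.1)⟩) ?_ ?_ ?_ ?_ (fun _ _ => rfl) <;>
  rintro ⟨⟨i, q⟩, j, l⟩ h <;>
  simp only [mem_sigma, HasAntidiagonal.mem_antidiagonal, and_true] at h ⊢ <;>
  obtain ⟨rfl, rfl⟩ := h <;> first | omega | rfl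

theorem sum_antidiagonal_antidiagonal_reverse (p : ℕ) (F : ℕ → ℕ → ℕ → M) :
    ∑ iq ∈ antidiagonal p, ∑ jl ∈ antidiagonal iq.2, F jl.2 jl.1 iq.1
      = ∑ iq ∈ antidiagonal p, ∑ jl ∈ antidiagonal iq.2, F iq.1 jl.1 jl.2 := by
  rw [sum_sigma', sum_sigma']
  refine sum_nbij' (fun x => ⟨(x.2.2, x.2.1 + x.1.1), (x.2.1, x.1.1)⟩)
    (fun x => ⟨(x.2.2, x.2.1 + x.1.1), (x.2.1, x.1.1)⟩) ?_ ?_ ?_ ?_ (fun _ _ => rfl) <;>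
  rintro ⟨⟨i, q⟩, j, l⟩ h <;>
  simp only [mem_sigma, HasAntidiagonal.mem_antidiagonal, and_true] at h ⊢ <;>
  obtain ⟨rfl, rfl⟩ := h <;> first | omega | rfl

end Reindex

section Cochains

variable {G k A : Type*} [AddCommGroup G] [Field k] [AddCommGroup A] [Module k A]
  (ε : Bicharacter G k)

def IsDegreeZero (𝒜 : G → Submodule k A) (m : A →ₗ[k] A →ₗ[k] A) : Prop :=
  ∀ a b : G, ∀ x ∈ 𝒜 a, ∀ y ∈ 𝒜 b, m x y ∈ 𝒜 (a + b)

def colorBracket (m : A →ₗ[k] A →ₗ[k] A) (a b : G) (x y : A) : A :=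
  m x y - ε.ε a b • m y x

/-- `(V ∗ W)(x, y, z)` for `x`, `y` of degrees `a`, `b`. -/
def cochainStar (V W : A →ₗ[k] A →ₗ[k] A) (a b : G) (x y z : A) : A :=
  V (W x y) z - V x (W y z) - ε.ε a b • (V (W y x) z - V y (W x z))

/-- The terms of `dThree` in which `m` is applied last. -/
def dThreeOuter (m : A →ₗ[k] A →ₗ[k] A) (g : G → G → A → A → A → A)
    (a1 a2 a3 : G) (x1 x2 x3 x4 : A) : A :=
  m x1 (g a2 a3 x2 x3 x4)
  - ε.ε a1 a2 • m x2 (g a1 a3 x1 x3 x4)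
  + ε.ε (a1 + a2) a3 • m x3 (g a1 a2 x1 x2 x4)
  + ε.ε a1 (a2 + a3) • m (g a2 a3 x2 x3 x1) x4
  - ε.ε a2 a3 • m (g a1 a3 x1 x3 x2) x4
  + m (g a1 a2 x1 x2 x3) x4

def dThree (m : A →ₗ[k] A →ₗ[k] A) (g : G → G → A → A → A → A)
    (a1 a2 a3 : G) (x1 x2 x3 x4 : A) : A :=
  dThreeOuter ε m g a1 a2 a3 x1 x2 x3 x4
  - ε.ε a1 (a2 + a3) • g a2 a3 x2 x3 (m x1 x4)
  + ε.ε a2 a3 • g a1 a3 x1 x3 (m x2 x4)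
  - g a1 a2 x1 x2 (m x3 x4)
  - g (a1 + a2) a3 (colorBracket ε m a1 a2 x1 x2) x3 x4
  + ε.ε a2 a3 • g (a1 + a3) a2 (colorBracket ε m a1 a3 x1 x3) x2 x4
  + g a1 (a2 + a3) x1 (colorBracket ε m a2 a3 x2 x3) x4

/-- The terms of `dThree ε U (cochainStar ε V W)` in which `V` is applied to a `W`-product and a
`U`-product. -/
def dThreeCross (U V W : A →ₗ[k] A →ₗ[k] A) (a1 a2 a3 : G) (x1 x2 x3 x4 : A) : A :=
  - ε.ε a1 (a2 + a3) • V (colorBracket ε W a2 a3 x2 x3) (U x1 x4)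
  + ε.ε a2 a3 • V (colorBracket ε W a1 a3 x1 x3) (U x2 x4)
  - V (colorBracket ε W a1 a2 x1 x2) (U x3 x4)

theorem dThree_cochainStar (U V W : A →ₗ[k] A →ₗ[k] A) (a1 a2 a3 : G) (x1 x2 x3 x4 : A) :
    dThree ε U (cochainStar ε V W) a1 a2 a3 x1 x2 x3 x4
      = dThreeOuter ε U (cochainStar ε V W) a1 a2 a3 x1 x2 x3 x4
        - dThreeOuter ε V (cochainStar ε W U) a1 a2 a3 x1 x2 x3 x4
        + dThreeCross ε U V W a1 a2 a3 x1 x2 x3 x4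
        - dThreeCross ε W V U a1 a2 a3 x1 x2 x3 x4 := by
  have h32 : ε.ε a3 a2 = (ε.ε a2 a3)⁻¹ := eq_inv_of_mul_eq_one_left (ε.skew a3 a2)
  have n23 : ε.ε a2 a3 ≠ 0 := ε.ne_zero a2 a3
  simp only [dThree, dThreeOuter, dThreeCross, cochainStar, colorBracket, map_sub, map_smul,
    LinearMap.sub_apply, LinearMap.smul_apply, smul_sub, smul_smul, ε.add_left, ε.add_right, h32]
  match_scalars <;> field_simp

theorem sum_antidiagonal_dThree_cochainStar (v : ℕ → A →ₗ[k] A →ₗ[k] A) (p : ℕ)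
    (a1 a2 a3 : G) (x1 x2 x3 x4 : A) :
    ∑ iq ∈ antidiagonal p, ∑ jl ∈ antidiagonal iq.2,
      dThree ε (v iq.1) (cochainStar ε (v jl.1) (v jl.2)) a1 a2 a3 x1 x2 x3 x4 = 0 := by
  simp only [dThree_cochainStar, sum_sub_distrib, sum_add_distrib]
  rw [← sum_antidiagonal_antidiagonal_rotate p
      (fun i j l => dThreeOuter ε (v i) (cochainStar ε (v j) (v l)) a1 a2 a3 x1 x2 x3 x4),
    ← sum_antidiagonal_antidiagonal_reverse p
      (fun i j l => dThreeCross ε (v i) (v j) (v l) a1 a2 a3 x1 x2 x3 x4)]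
  abel

theorem dThree_sum {ι : Type*} (s : Finset ι) (m : A →ₗ[k] A →ₗ[k] A)
    (g : ι → G → G → A → A → A → A) (a1 a2 a3 : G) (x1 x2 x3 x4 : A) :
    dThree ε m (fun a b x y z => ∑ t ∈ s, g t a b x y z) a1 a2 a3 x1 x2 x3 x4
      = ∑ t ∈ s, dThree ε m (g t) a1 a2 a3 x1 x2 x3 x4 := by
  simp only [dThree, dThreeOuter, map_sum, LinearMap.sum_apply, smul_sum,
    ← sum_sub_distrib, ← sum_add_distrib]

theorem colorBracket_mem {𝒜 : G → Submodule k A} {m : A →ₗ[k] A →ₗ[k] A}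
    (hm : IsDegreeZero 𝒜 m) {a b : G} {x y : A} (hx : x ∈ 𝒜 a) (hy : y ∈ 𝒜 b) :
    colorBracket ε m a b x y ∈ 𝒜 (a + b) :=
  sub_mem (hm a b x hx y hy) (Submodule.smul_mem _ _ (add_comm b a ▸ hm b a y hy x hx))

theorem dThree_eq_zero_of_eq_zero {𝒜 : G → Submodule k A} {m : A →ₗ[k] A →ₗ[k] A}
    (hm : IsDegreeZero 𝒜 m) {g : G → G → A → A → A → A}
    (hg : ∀ a b c : G, ∀ x ∈ 𝒜 a, ∀ y ∈ 𝒜 b, ∀ z ∈ 𝒜 c, g a b x y z = 0)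
    {a1 a2 a3 a4 : G} {x1 x2 x3 x4 : A} (hx1 : x1 ∈ 𝒜 a1) (hx2 : x2 ∈ 𝒜 a2)
    (hx3 : x3 ∈ 𝒜 a3) (hx4 : x4 ∈ 𝒜 a4) :
    dThree ε m g a1 a2 a3 x1 x2 x3 x4 = 0 := by
  simp only [dThree, dThreeOuter, hg _ _ _ _ hx1 _ hx2 _ hx3, hg _ _ _ _ hx1 _ hx2 _ hx4,
    hg _ _ _ _ hx1 _ hx3 _ hx2, hg _ _ _ _ hx1 _ hx3 _ hx4, hg _ _ _ _ hx2 _ hx3 _ hx1,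
    hg _ _ _ _ hx2 _ hx3 _ hx4, hg _ _ _ _ hx2 _ hx3 _ (hm _ _ _ hx1 _ hx4),
    hg _ _ _ _ hx1 _ hx3 _ (hm _ _ _ hx2 _ hx4), hg _ _ _ _ hx1 _ hx2 _ (hm _ _ _ hx3 _ hx4),
    hg _ _ _ _ (colorBracket_mem ε hm hx1 hx2) _ hx3 _ hx4,
    hg _ _ _ _ (colorBracket_mem ε hm hx1 hx3) _ hx2 _ hx4,
    hg _ _ _ _ hx1 _ (colorBracket_mem ε hm hx2 hx3) _ hx4]
  simp

theorem starSum_eq_sum_antidiagonal (f : ℕ → A →ₗ[k] A →ₗ[k] A) {p : ℕ} (hp : 0 < p)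
    (a b : G) (x y z : A) :
    starSum ε f p a b x y z = ∑ jl ∈ antidiagonal p,
      cochainStar ε ((Set.Iio p).indicator f jl.1) ((Set.Iio p).indicator f jl.2) a b x y z := by
  have hfp : (Set.Iio p).indicator f p = 0 := Set.indicator_of_notMem (lt_irrefl p) f
  rw [Nat.sum_antidiagonal_eq_sum_range_succ_mk, sum_range_succ, range_eq_Ico,
    sum_eq_sum_Ico_succ_bot hp]
  simp only [Nat.sub_zero, Nat.sub_self, hfp, cochainStar, LinearMap.zero_apply, map_zero,
    sub_self, smul_zero, zero_add, add_zero]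
  refine sum_congr rfl fun i hi => ?_
  rw [mem_Ico] at hi
  rw [Set.indicator_of_mem (Set.mem_Iio.2 hi.2),
    Set.indicator_of_mem (Set.mem_Iio.2 (Nat.sub_lt hp hi.1))]

end Cochains

end LeftSymmetricColor

open LeftSymmetricColor Finset

theorem obstruction_is_three_cocycle_general {G k A : Type*} [AddCommGroup G]
    [Field k] [AddCommGroup A] [Module k A]
    (ε : Bicharacter G k) (𝒜 : G → Submodule k A) (μ : A →ₗ[k] A →ₗ[k] A)
    (p : ℕ) (hp : 2 ≤ p) (f : ℕ → (A →ₗ[k] A →ₗ[k] A)) (hf0 : f 0 = μ)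
    (hfgr : ∀ (i : ℕ) (a b : G), ∀ x ∈ 𝒜 a, ∀ y ∈ 𝒜 b, f i x y ∈ 𝒜 (a + b))
    (hcoef : ∀ q : ℕ, q ≤ p - 1 → ∀ a b c : G, ∀ x ∈ 𝒜 a, ∀ y ∈ 𝒜 b, ∀ z ∈ 𝒜 c,
      ∑ ij ∈ Finset.HasAntidiagonal.antidiagonal q,
        (f ij.1 (f ij.2 x y) z - f ij.1 x (f ij.2 y z)
          - ε.ε a b • (f ij.1 (f ij.2 y x) z - f ij.1 y (f ij.2 x z))) = 0) :
    ∀ a1 a2 a3 a4 : G, ∀ x1 ∈ 𝒜 a1, ∀ x2 ∈ 𝒜 a2, ∀ x3 ∈ 𝒜 a3, ∀ x4 ∈ 𝒜 a4,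
      μ x1 (starSum ε f p a2 a3 x2 x3 x4)
      - ε.ε a1 a2 • μ x2 (starSum ε f p a1 a3 x1 x3 x4)
      + ε.ε (a1 + a2) a3 • μ x3 (starSum ε f p a1 a2 x1 x2 x4)
      + ε.ε a1 (a2 + a3) • μ (starSum ε f p a2 a3 x2 x3 x1) x4
      - ε.ε a2 a3 • μ (starSum ε f p a1 a3 x1 x3 x2) x4
      + μ (starSum ε f p a1 a2 x1 x2 x3) x4
      - ε.ε a1 (a2 + a3) • starSum ε f p a2 a3 x2 x3 (μ x1 x4)
      + ε.ε a2 a3 • starSum ε f p a1 a3 x1 x3 (μ x2 x4)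
      - starSum ε f p a1 a2 x1 x2 (μ x3 x4)
      - starSum ε f p (a1 + a2) a3 (μ x1 x2 - ε.ε a1 a2 • μ x2 x1) x3 x4
      + ε.ε a2 a3 • starSum ε f p (a1 + a3) a2 (μ x1 x3 - ε.ε a1 a3 • μ x3 x1) x2 x4
      + starSum ε f p a1 (a2 + a3) x1 (μ x2 x3 - ε.ε a2 a3 • μ x3 x2) x4 = 0 := by
  intro a1 a2 a3 a4 x1 hx1 x2 hx2 x3 hx3 x4 hx4
  change dThree ε μ (starSum ε f p) a1 a2 a3 x1 x2 x3 x4 = 0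
  set v := (Set.Iio p).indicator f
  have hv : ∀ n < p, v n = f n := fun n hn => Set.indicator_of_mem (Set.mem_Iio.2 hn) f
  have hv_deg : ∀ n, IsDegreeZero 𝒜 (v n) := fun n => by
    by_cases hn : n < p
    · rw [hv n hn]; exact hfgr n
    · simp [v, Set.indicator_of_notMem (Set.notMem_Iio.2 (not_lt.1 hn)), IsDegreeZero]
  have h_lower_order : ∀ iq ∈ antidiagonal p, iq ≠ (0, p) → ∑ jl ∈ antidiagonal iq.2,
      dThree ε (v iq.1) (cochainStar ε (v jl.1) (v jl.2)) a1 a2 a3 x1 x2 x3 x4 = 0 := by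
    rintro ⟨i, q⟩ hiq hne
    rw [HasAntidiagonal.mem_antidiagonal] at hiq
    have hq : q < p := lt_of_le_of_ne (by omega) fun hqp => hne (by rw [Prod.mk.injEq]; omega)
    rw [← dThree_sum]
    refine dThree_eq_zero_of_eq_zero ε (hv_deg i) (fun a b c x hx y hy z hz => ?_)
      hx1 hx2 hx3 hx4
    rw [← hcoef q (by omega) a b c x hx y hy z hz]
    refine sum_congr rfl fun jl hjl => ?_
    rw [HasAntidiagonal.mem_antidiagonal] at hjl
    rw [cochainStar, hv jl.1 (by omega), hv jl.2 (by omega)]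
  have key := sum_antidiagonal_dThree_cochainStar ε v p a1 a2 a3 x1 x2 x3 x4
  rw [sum_eq_single_of_mem (0, p) (by simp) h_lower_order, ← dThree_sum, hv 0 (by omega), hf0]
    at key
  convert key using 2
  funext a b x y z
  exact starSum_eq_sum_antidiagonal ε f (by omega) a b x y z

/-- Let `p ≥ 2` and let `f₀ = μ, f₁, …, f_{p−1}` be 2-cochains of
degree 0 on the finite-dimensional left-symmetric color algebra `A` satisfying the
deformation coefficient equations up to order `p − 1`.  Then the degree-0 3-cochain
`g := Σ_{i=1}^{p−1} f_i ∗ f_{p−i}` is a 3-cocycle of degree 0, i.e. `d₃(g) = 0` on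
homogeneous elements. -/
theorem obstruction_is_three_cocycle {G k A : Type*} [AddCommGroup G] [DecidableEq G]
    [Field k] [AddCommGroup A] [Module k A] [FiniteDimensional k A]
    (ε : Bicharacter G k) (𝒜 : G → Submodule k A) (μ : A →ₗ[k] A →ₗ[k] A)
    (hA : IsLSCA ε 𝒜 μ)
    (p : ℕ) (hp : 2 ≤ p) (f : ℕ → (A →ₗ[k] A →ₗ[k] A)) (hf0 : f 0 = μ)
    (hfgr : ∀ (i : ℕ) (a b : G), ∀ x ∈ 𝒜 a, ∀ y ∈ 𝒜 b, f i x y ∈ 𝒜 (a + b))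
    (hcoef : ∀ q : ℕ, q ≤ p - 1 → ∀ a b c : G, ∀ x ∈ 𝒜 a, ∀ y ∈ 𝒜 b, ∀ z ∈ 𝒜 c,
      ∑ ij ∈ Finset.HasAntidiagonal.antidiagonal q,
        (f ij.1 (f ij.2 x y) z - f ij.1 x (f ij.2 y z)
          - ε.ε a b • (f ij.1 (f ij.2 y x) z - f ij.1 y (f ij.2 x z))) = 0) :
    ∀ a1 a2 a3 a4 : G, ∀ x1 ∈ 𝒜 a1, ∀ x2 ∈ 𝒜 a2, ∀ x3 ∈ 𝒜 a3, ∀ x4 ∈ 𝒜 a4,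
      μ x1 (starSum ε f p a2 a3 x2 x3 x4)
      - ε.ε a1 a2 • μ x2 (starSum ε f p a1 a3 x1 x3 x4)
      + ε.ε (a1 + a2) a3 • μ x3 (starSum ε f p a1 a2 x1 x2 x4)
      + ε.ε a1 (a2 + a3) • μ (starSum ε f p a2 a3 x2 x3 x1) x4
      - ε.ε a2 a3 • μ (starSum ε f p a1 a3 x1 x3 x2) x4
      + μ (starSum ε f p a1 a2 x1 x2 x3) x4
      - ε.ε a1 (a2 + a3) • starSum ε f p a2 a3 x2 x3 (μ x1 x4)
      + ε.ε a2 a3 • starSum ε f p a1 a3 x1 x3 (μ x2 x4)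
      - starSum ε f p a1 a2 x1 x2 (μ x3 x4)
      - starSum ε f p (a1 + a2) a3 (μ x1 x2 - ε.ε a1 a2 • μ x2 x1) x3 x4
      + ε.ε a2 a3 • starSum ε f p (a1 + a3) a2 (μ x1 x3 - ε.ε a1 a3 • μ x3 x1) x2 x4
      + starSum ε f p a1 (a2 + a3) x1 (μ x2 x3 - ε.ε a2 a3 • μ x3 x2) x4 = 0 :=
  obstruction_is_three_cocycle_general ε 𝒜 μ p hp f hf0 hfgr hcoef
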